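/- The skew-symmetric bilinear map φ_3 on h_2 defined by φ_3(e_1,e_4) = e_1, φ_3(e_2,e_4) = e_2, φ_3(e_3,e_4) = e_3, φ_3(e_4,e_5) = −2e_5, and zero otherwise, is a 2-cocycle of h_2 with adjoint coefficients, and moreover the bracket [x,y]_t = [x,y] + t φ_3(x,y) satisfies the Jacobi identity for every scalar t (i.e., it defines a genuine one-parameter family of Lie algebra structures). -/

import Mathlib

noncomputable section

/-- The underlying space of the 5-dimensional Heisenberg Lie algebra `h₂`. -/
abbrev V : Type := Fin 5 → ℝ

/-- Basis vectors: `e 0, …, e 4` are `e₁, …, e₅`. -/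
def e (i : Fin 5) : V := Pi.single i 1

/-- The Heisenberg bracket on `h₂`: `[e₁,e₃] = e₅`, `[e₂,e₄] = e₅`. -/
def br (x y : V) : V :=
  (x 0 * y 2 - x 2 * y 0 + x 1 * y 3 - x 3 * y 1) • e 4

/-- The deformed bracket `[x,y]_t = [x,y] + t • φ x y`. -/
def brt (t : ℝ) (φ : V → V → V) (x y : V) : V := br x y + t • φ x y

/-- The Chevalley–Eilenberg 2-cocycle condition (adjoint coefficients) for a
skew-symmetric 2-cochain `φ` on `h₂`. -/
def IsCocycle (φ : V → V → V) : Prop :=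
  ∀ x y z : V,
    φ (br x y) z - φ (br x z) y + φ (br y z) x
      - br x (φ y z) + br y (φ x z) - br z (φ x y) = 0

/-- `φ₃(e₁,e₄) = e₁`, `φ₃(e₂,e₄) = e₂`, `φ₃(e₃,e₄) = e₃`, `φ₃(e₄,e₅) = −2e₅`, zero otherwise. -/
def phi3 (x y : V) : V :=
  (x 0 * y 3 - x 3 * y 0) • e 0
  + (x 1 * y 3 - x 3 * y 1) • e 1
  + (x 2 * y 3 - x 3 * y 2) • e 2
  + (x 3 * y 4 - x 4 * y 3) • ((-2:ℝ) • e 4)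

/-!
Write `φ₃(x, y) = ξ(y) D x - ξ(x) D y` with `ξ = e₄*` and `D = diag(1, 1, 1, 1, 2)`; the entry
`D e₄` does not affect `φ₃`, and choosing it to be `1` makes `D` the grading derivation of `h₂`.
Since `D` is a derivation and `ξ` kills `[h₂, h₂]`, `φ₃` is a cocycle; since `ξ ∘ D = ξ`, `ξ`
kills `φ₃` as well, which forces the Jacobi identity for `φ₃`. The Jacobiator of
`[·,·] + t φ` is `J([·,·]) - t dφ + t² J(φ)`, so all three terms vanish.
-/

section Deformation

variable {R M : Type*} [CommRing R] [AddCommGroup M] [Module R M]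

def jacobiator (B : M → M → M) (x y z : M) : M :=
  B x (B y z) + B y (B z x) + B z (B x y)

def ceDifferential (B φ : M → M → M) (x y z : M) : M :=
  φ (B x y) z - φ (B x z) y + φ (B y z) x - B x (φ y z) + B y (φ x z) - B z (φ x y)

theorem jacobiator_add_smul {B φ : M → M → M} (hB : ∀ x, IsLinearMap R (B x))
    (hφ : ∀ x, IsLinearMap R (φ x)) (hB_skew : ∀ x y, B x y = -B y x)
    (hφ_skew : ∀ x y, φ x y = -φ y x) (t : R) (x y z : M) :
    jacobiator (fun x y => B x y + t • φ x y) x y z =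
      jacobiator B x y z - t • ceDifferential B φ x y z + t ^ 2 • jacobiator φ x y z := by
  have h₁ : φ (B x y) z = -φ z (B x y) := hφ_skew _ _
  have h₂ : φ (B x z) y = φ y (B z x) := by rw [hφ_skew, hB_skew, (hφ y).map_neg, neg_neg]
  have h₃ : φ (B y z) x = -φ x (B y z) := hφ_skew _ _
  have h₄ : B y (φ x z) = -B y (φ z x) := by rw [hφ_skew, (hB y).map_neg]
  simp only [jacobiator, ceDifferential, (hB _).map_add, (hB _).map_smul, (hφ _).map_add,
    (hφ _).map_smul, h₁, h₂, h₃, h₄]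
  module

def skewCochain (ξ : Module.Dual R M) (D : M →ₗ[R] M) (x y : M) : M :=
  ξ y • D x - ξ x • D y

variable (ξ : Module.Dual R M) (D : M →ₗ[R] M)

theorem skewCochain_swap (x y : M) : skewCochain ξ D x y = -skewCochain ξ D y x := by
  simp only [skewCochain, neg_sub]

theorem isLinearMap_skewCochain (x : M) : IsLinearMap R (skewCochain ξ D x) where
  map_add y z := by simp only [skewCochain, map_add]; module
  map_smul c y := by simp only [skewCochain, map_smul, smul_eq_mul]; module

theorem jacobiator_skewCochain {c : R} (hξD : ∀ x, ξ (D x) = c * ξ x) (x y z : M) :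
    jacobiator (skewCochain ξ D) x y z = 0 := by
  have hξ : ∀ y z, ξ (skewCochain ξ D y z) = 0 := fun y z => by
    simp only [skewCochain, map_sub, map_smul, smul_eq_mul]
    rw [hξD, hξD]
    ring
  have hφφ : ∀ x y z, skewCochain ξ D x (skewCochain ξ D y z) =
      -(ξ x • (ξ z • D (D y) - ξ y • D (D z))) := fun x y z => by
    rw [skewCochain, hξ, zero_smul, zero_sub, skewCochain, map_sub, map_smul, map_smul]
  simp only [jacobiator, hφφ]
  module

theorem ceDifferential_skewCochain {B : M → M → M} (hB : ∀ x, IsLinearMap R (B x))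
    (hB_skew : ∀ x y, B x y = -B y x) (hD : ∀ x y, D (B x y) = B (D x) y + B x (D y))
    (hξ : ∀ x y, ξ (B x y) = 0) (x y z : M) :
    ceDifferential B (skewCochain ξ D) x y z = 0 := by
  have h₁ : B y (D x) = -B (D x) y := hB_skew _ _
  have h₂ : B z (D x) = -B (D x) z := hB_skew _ _
  have h₃ : B z (D y) = -B (D y) z := hB_skew _ _
  simp only [ceDifferential, skewCochain, hξ, hD, zero_smul, sub_zero, (hB _).map_sub,
    (hB _).map_smul, h₁, h₂, h₃]
  module

end Deformation

theorem br_swap (x y : V) : br x y = -br y x := by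
  rw [br, br, ← neg_smul]
  congr 1
  ring

theorem isLinearMap_br (x : V) : IsLinearMap ℝ (br x) where
  map_add y z := by simp only [br, Pi.add_apply, ← add_smul]; congr 1; ring
  map_smul c y := by simp only [br, Pi.smul_apply, smul_eq_mul, smul_smul]; congr 1; ring

theorem br_apply_three (x y : V) : br x y 3 = 0 := by
  simp [br, e]

theorem br_br (x y z : V) : br x (br y z) = 0 := by
  simp [br, e]

def grading : V →ₗ[ℝ] V := Matrix.toLin' (Matrix.diagonal ![1, 1, 1, 1, 2])

theorem grading_apply (x : V) (i : Fin 5) : grading x i = ![1, 1, 1, 1, 2] i * x i := by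
  simp [grading, Matrix.mulVec_diagonal]

theorem grading_br (x y : V) : grading (br x y) = br (grading x) y + br x (grading y) := by
  ext i
  fin_cases i <;>
    simp only [br, e, grading_apply, Pi.add_apply, Pi.smul_apply, Pi.single_apply, smul_eq_mul,
      Matrix.cons_val, Fin.isValue, Fin.reduceEq, Fin.reduceFinMk, if_true, if_false] <;> ring

theorem phi3_eq_skewCochain : phi3 = skewCochain (LinearMap.proj 3) grading := by
  ext x y i
  fin_cases i <;>
    simp only [phi3, skewCochain, e, grading_apply, LinearMap.coe_proj, Function.eval, Pi.add_apply,
      Pi.sub_apply, Pi.smul_apply, Pi.single_apply, smul_eq_mul, Matrix.cons_val, Fin.isValue,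
      Fin.reduceEq, Fin.reduceFinMk, if_true, if_false] <;> ring

/-- `φ₃` is a 2-cocycle, and `[x,y]_t = [x,y] + t φ₃(x,y)` satisfies the Jacobi
identity for every scalar `t`. -/
theorem phi3_cocycle_and_jacobi :
    IsCocycle phi3 ∧
      ∀ (t : ℝ) (x y z : V),
        brt t phi3 x (brt t phi3 y z) + brt t phi3 y (brt t phi3 z x)
          + brt t phi3 z (brt t phi3 x y) = 0 := by
  set ξ : Module.Dual ℝ V := LinearMap.proj 3
  have hξ (x : V) : ξ (grading x) = 1 * ξ x := by simp [ξ, grading_apply]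
  rw [phi3_eq_skewCochain]
  have hcocycle (x y z : V) : ceDifferential br (skewCochain ξ grading) x y z = 0 :=
    ceDifferential_skewCochain ξ grading isLinearMap_br br_swap grading_br br_apply_three x y z
  refine ⟨hcocycle, fun t x y z => ?_⟩
  have hJbr : jacobiator br x y z = 0 := by simp only [jacobiator, br_br, add_zero]
  change jacobiator (fun x y => br x y + t • skewCochain ξ grading x y) x y z = 0
  rw [jacobiator_add_smul isLinearMap_br (isLinearMap_skewCochain ξ grading) br_swap
    (skewCochain_swap ξ grading), hJbr, hcocycle, jacobiator_skewCochain ξ grading hξ]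
  simp

end
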